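/- arXiv:1704.05822 — 3 statements merged into one kernel-verified Lean document; each statement's English description precedes it below -/
import Mathlib

section
/- The quantum relative entropy KL(ρ₁‖ρ₂) = Tr[ρ₁(ln ρ₁ − ln ρ₂)] equals zero if and only if ρ₁ = ρ₂, for positive-definite density matrices. -/
open Matrix ComplexOrder

/-- Klein-type pointwise inequality with equality case. -/
lemma klein_aux (a b : ℝ) (ha : 0 < a) (hb : 0 < b) :
    0 ≤ a * (Real.log a - Real.log b) - (a - b) ∧
      (a * (Real.log a - Real.log b) - (a - b) = 0 → a = b) := by
  have hkey : a * (Real.log a - Real.log b) - (a - b)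
      = a * ((b / a - 1) - (Real.log b - Real.log a)) := by
    field_simp
    ring
  have hlog : Real.log b - Real.log a ≤ b / a - 1 := by
    have := Real.log_le_sub_one_of_pos (div_pos hb ha)
    rwa [Real.log_div hb.ne' ha.ne'] at this
  constructor
  · rw [hkey]
    exact mul_nonneg ha.le (by linarith)
  · intro h
    by_contra hne
    have hne' : b / a ≠ 1 := by
      intro hc
      exact hne ((div_eq_one_iff_eq ha.ne').mp hc).symm
    have hstrict : Real.log b - Real.log a < b / a - 1 := by
      have := Real.log_lt_sub_one_of_pos (div_pos hb ha) hne'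
      rwa [Real.log_div hb.ne' ha.ne'] at this
    rw [hkey] at h
    nlinarith

lemma klein_sum {n : Type*} [Fintype n] (d e : n → ℝ) (P : n → n → ℝ)
    (hd : ∀ i, 0 < d i) (he : ∀ j, 0 < e j) (hP : ∀ i j, 0 ≤ P i j)
    (hrow : ∀ i, ∑ j, P i j = 1) (hcol : ∀ j, ∑ i, P i j = 1)
    (hd1 : ∑ i, d i = 1) (he1 : ∑ j, e j = 1)
    (hS : (∑ i, d i * Real.log (d i)) - ∑ i, ∑ j, d i * Real.log (e j) * P i j = 0) :
    ∀ i j, P i j ≠ 0 → d i = e j := by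
  set F : n → n → ℝ :=
    fun i j => P i j * (d i * (Real.log (d i) - Real.log (e j)) - (d i - e j)) with hF
  have hF0 : ∀ i j, 0 ≤ F i j := fun i j =>
    mul_nonneg (hP i j) (klein_aux (d i) (e j) (hd i) (he j)).1
  have hA : ∀ i, ∑ j, F i j =
      d i * Real.log (d i) - (∑ j, d i * Real.log (e j) * P i j) - d i + ∑ j, P i j * e j := by
    intro i
    have h1 : ∑ j, F i j = ∑ j, (d i * Real.log (d i) * P i j
        - d i * Real.log (e j) * P i j - d i * P i j + P i j * e j) :=
      Finset.sum_congr rfl fun j _ => by rw [hF]; ring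
    rw [h1, Finset.sum_add_distrib, Finset.sum_sub_distrib, Finset.sum_sub_distrib,
      ← Finset.mul_sum, ← Finset.mul_sum, hrow i, mul_one, mul_one]
  have hlast : ∑ i, ∑ j, P i j * e j = 1 := by
    rw [Finset.sum_comm]
    have : ∀ j, ∑ i, P i j * e j = e j := by
      intro j
      rw [← Finset.sum_mul, hcol j, one_mul]
    rw [Finset.sum_congr rfl fun j _ => this j, he1]
  have hsum : ∑ i, ∑ j, F i j = 0 := by
    rw [Finset.sum_congr rfl fun i _ => hA i, Finset.sum_add_distrib,
      Finset.sum_sub_distrib, Finset.sum_sub_distrib, hlast, hd1]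
    linarith
  have hzero : ∀ i j, F i j = 0 := by
    have h1 := (Finset.sum_eq_zero_iff_of_nonneg
      (fun i _ => Finset.sum_nonneg fun j _ => hF0 i j)).mp hsum
    intro i j
    exact (Finset.sum_eq_zero_iff_of_nonneg (fun j _ => hF0 i j)).mp
      (h1 i (Finset.mem_univ i)) j (Finset.mem_univ j)
  intro i j hPij
  have := hzero i j
  rw [hF, mul_eq_zero] at this
  exact (klein_aux (d i) (e j) (hd i) (he j)).2 (this.resolve_left hPij)

/-- Matrix logarithm of a Hermitian matrix, defined via the spectral decomposition. -/
noncomputable def matLog {n : Type*} [Fintype n] [DecidableEq n] {ρ : Matrix n n ℂ}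
    (h : ρ.IsHermitian) : Matrix n n ℂ :=
  (h.eigenvectorUnitary : Matrix n n ℂ) *
    Matrix.diagonal (fun i => (Real.log (h.eigenvalues i) : ℂ)) *
    star (h.eigenvectorUnitary : Matrix n n ℂ)

/-- The quantum relative entropy KL(ρ₁‖ρ₂) = Tr[ρ₁(ln ρ₁ − ln ρ₂)] of
positive-definite density matrices vanishes iff ρ₁ = ρ₂. -/
theorem quantum_relative_entropy_eq_zero_iff
    {n : Type*} [Fintype n] [DecidableEq n] [Nonempty n]
    (ρ₁ ρ₂ : Matrix n n ℂ)
    (h₁ : ρ₁.IsHermitian) (h₂ : ρ₂.IsHermitian)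
    (hpd₁ : ρ₁.PosDef) (hpd₂ : ρ₂.PosDef)
    (htr₁ : ρ₁.trace = 1) (htr₂ : ρ₂.trace = 1) :
    Matrix.trace (ρ₁ * (matLog h₁ - matLog h₂)) = 0 ↔ ρ₁ = ρ₂ := by
  constructor
  · intro htr0
    set U : Matrix n n ℂ := (h₁.eigenvectorUnitary : Matrix n n ℂ) with hUdef
    set V : Matrix n n ℂ := (h₂.eigenvectorUnitary : Matrix n n ℂ) with hVdef
    set d : n → ℝ := h₁.eigenvalues with hddef
    set e : n → ℝ := h₂.eigenvalues with hedef
    have hU1 : star U * U = 1 := mem_unitaryGroup_iff'.mp (h₁.eigenvectorUnitary).2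
    have hU2 : U * star U = 1 := mem_unitaryGroup_iff.mp (h₁.eigenvectorUnitary).2
    have hV1 : star V * V = 1 := mem_unitaryGroup_iff'.mp (h₂.eigenvectorUnitary).2
    have hV2 : V * star V = 1 := mem_unitaryGroup_iff.mp (h₂.eigenvectorUnitary).2
    have cUl : ∀ X : Matrix n n ℂ, star U * (U * X) = X := fun X => by
      rw [← mul_assoc, hU1, one_mul]
    have cUr : ∀ X : Matrix n n ℂ, U * (star U * X) = X := fun X => by
      rw [← mul_assoc, hU2, one_mul]
    have cVl : ∀ X : Matrix n n ℂ, star V * (V * X) = X := fun X => by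
      rw [← mul_assoc, hV1, one_mul]
    have cVr : ∀ X : Matrix n n ℂ, V * (star V * X) = X := fun X => by
      rw [← mul_assoc, hV2, one_mul]
    set W : Matrix n n ℂ := star U * V with hWdef
    set P : n → n → ℝ := fun i j => Complex.normSq (W i j) with hPdef
    have hρ₁ : ρ₁ = U * diagonal (fun i => ((d i : ℝ) : ℂ)) * star U := h₁.spectral_theorem
    have hρ₂ : ρ₂ = V * diagonal (fun j => ((e j : ℝ) : ℂ)) * star V := h₂.spectral_theorem
    have hL1 : matLog h₁ = U * diagonal (fun i => ((Real.log (d i) : ℝ) : ℂ)) * star U := rfl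
    have hL2 : matLog h₂ = V * diagonal (fun j => ((Real.log (e j) : ℝ) : ℂ)) * star V := rfl
    -- unitarity of W
    have hWW : W * star W = 1 := by
      simp only [hWdef, Matrix.star_mul, star_star, mul_assoc, cVr, hU1]
    have hWW' : star W * W = 1 := by
      simp only [hWdef, Matrix.star_mul, star_star, mul_assoc, cUr, hV1]
    -- row and column sums of P
    have hrow : ∀ i, ∑ j, P i j = 1 := by
      intro i
      have h0 := congrArg (fun M : Matrix n n ℂ => M i i) hWW
      simp only [Matrix.mul_apply, Matrix.star_apply, Matrix.one_apply_eq] at h0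
      have h1 : ((∑ j, P i j : ℝ) : ℂ) = 1 := by
        rw [Complex.ofReal_sum]
        rw [← h0]
        exact Finset.sum_congr rfl fun j _ => by
          rw [hPdef, ← Complex.mul_conj, Complex.star_def]
      exact_mod_cast h1
    have hcol : ∀ j, ∑ i, P i j = 1 := by
      intro j
      have h0 := congrArg (fun M : Matrix n n ℂ => M j j) hWW'
      simp only [Matrix.mul_apply, Matrix.star_apply, Matrix.one_apply_eq] at h0
      have h1 : ((∑ i, P i j : ℝ) : ℂ) = 1 := by
        rw [Complex.ofReal_sum]
        rw [← h0]
        exact Finset.sum_congr rfl fun i _ => by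
          rw [hPdef, ← Complex.mul_conj, Complex.star_def, mul_comm]
      exact_mod_cast h1
    -- eigenvalue sums
    have hd1 : ∑ i, d i = 1 := by
      have h0 : Matrix.trace ρ₁ = ((∑ i, d i : ℝ) : ℂ) := by
        rw [hρ₁, trace_mul_cycle, hU1, one_mul, trace_diagonal, Complex.ofReal_sum]
      exact_mod_cast h0.symm.trans htr₁
    have he1 : ∑ j, e j = 1 := by
      have h0 : Matrix.trace ρ₂ = ((∑ j, e j : ℝ) : ℂ) := by
        rw [hρ₂, trace_mul_cycle, hV1, one_mul, trace_diagonal, Complex.ofReal_sum]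
      exact_mod_cast h0.symm.trans htr₂
    have hd : ∀ i, 0 < d i := fun i => hpd₁.eigenvalues_pos i
    have he : ∀ j, 0 < e j := fun j => hpd₂.eigenvalues_pos j
    -- trace computations
    have e1 : ρ₁ * matLog h₁
        = U * (diagonal (fun i => ((d i : ℝ) : ℂ)) *
            diagonal (fun i => ((Real.log (d i) : ℝ) : ℂ))) * star U := by
      rw [hL1]
      nth_rewrite 1 [hρ₁]
      simp only [mul_assoc, cUl]
    have t1 : Matrix.trace (ρ₁ * matLog h₁)
        = ((∑ i, d i * Real.log (d i) : ℝ) : ℂ) := by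
      rw [e1, trace_mul_cycle, hU1, one_mul, diagonal_mul_diagonal, trace_diagonal]
      push_cast
      rfl
    have e2 : ρ₁ * matLog h₂
        = U * (diagonal (fun i => ((d i : ℝ) : ℂ)) * W *
            diagonal (fun j => ((Real.log (e j) : ℝ) : ℂ)) * star W) * star U := by
      rw [hL2]
      nth_rewrite 1 [hρ₁]
      simp only [hWdef, Matrix.star_mul, star_star, mul_assoc, hU2, mul_one]
    have t2 : Matrix.trace (ρ₁ * matLog h₂)
        = ((∑ i, ∑ j, d i * Real.log (e j) * P i j : ℝ) : ℂ) := by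
      rw [e2, trace_mul_cycle, hU1, one_mul]
      rw [Matrix.trace]
      push_cast
      refine Finset.sum_congr rfl fun i _ => ?_
      rw [Matrix.diag_apply, Matrix.mul_apply]
      refine Finset.sum_congr rfl fun j _ => ?_
      rw [Matrix.mul_diagonal, Matrix.diagonal_mul, Matrix.star_apply]
      rw [show ((d i : ℂ)) * W i j * ((Real.log (e j) : ℂ)) * star (W i j)
          = (d i : ℂ) * (Real.log (e j) : ℂ) * (W i j * star (W i j)) from by ring,
        Complex.star_def, Complex.mul_conj]
    -- reduce to the real statement
    have hSR : (∑ i, d i * Real.log (d i)) - ∑ i, ∑ j, d i * Real.log (e j) * P i j = 0 := by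
      have h0 : Matrix.trace (ρ₁ * (matLog h₁ - matLog h₂))
          = (((∑ i, d i * Real.log (d i)) - ∑ i, ∑ j, d i * Real.log (e j) * P i j : ℝ) : ℂ) := by
        rw [mul_sub, trace_sub, t1, t2, Complex.ofReal_sub]
      rw [h0] at htr0
      exact_mod_cast htr0
    have H := klein_sum d e P hd he (fun i j => Complex.normSq_nonneg _) hrow hcol hd1 he1 hSR
    -- conclude equality of matrices
    have hcomm : W * diagonal (fun j => ((e j : ℝ) : ℂ))
        = diagonal (fun i => ((d i : ℝ) : ℂ)) * W := by
      ext i j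
      rw [Matrix.mul_diagonal, Matrix.diagonal_mul]
      by_cases h : W i j = 0
      · simp [h]
      · have hde : d i = e j := H i j (fun hP0 => h (Complex.normSq_eq_zero.mp hP0))
        rw [hde, mul_comm]
    have hUW : U * W = V := cUr V
    have hmid : W * diagonal (fun j => ((e j : ℝ) : ℂ)) * star W
        = diagonal (fun i => ((d i : ℝ) : ℂ)) := by
      rw [hcomm, mul_assoc, hWW, mul_one]
    have : ρ₂ = ρ₁ := by
      calc ρ₂ = (U * W) * diagonal (fun j => ((e j : ℝ) : ℂ)) * star (U * W) := by
            rw [hUW]; exact hρ₂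
        _ = U * (W * diagonal (fun j => ((e j : ℝ) : ℂ)) * star W) * star U := by
            rw [Matrix.star_mul]; simp only [mul_assoc]
        _ = U * diagonal (fun i => ((d i : ℝ) : ℂ)) * star U := by rw [hmid]
        _ = ρ₁ := hρ₁.symm
    exact this.symm
  · rintro rfl
    rw [Subsingleton.elim h₂ h₁, sub_self, mul_zero, trace_zero]
end

section
/- For a Hermitian matrix H on a finite-dimensional Hilbert space and any positive-definite density matrix ρ, the quantity Tr[ρ·(−βH)] − Tr[ρ ln ρ] is at most ln Tr[e^{−βH}], with equality iff ρ = e^{−βH}/Tr[e^{−βH}] (Gibbs variational principle). -/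
/-!
With `A = -βH`, `Z = Tr e^A` and the Gibbs state `σ = e^A / Z` we have `log σ = A - log Z`, so the
claim is Klein's inequality `Tr ρ log σ - Tr ρ log ρ ≤ Tr σ - Tr ρ = 0`, with equality iff `ρ = σ`.
Diagonalising `ρ = U diag(p) U*` and `σ = V diag(r) V*`, both traces become sums over pairs of
eigenvectors weighted by `|(U* V)ᵢⱼ|²`, a doubly stochastic matrix, and the inequality follows
termwise from `pᵢ (log rⱼ - log pᵢ) ≤ rⱼ - pᵢ`. Equality forces `pᵢ = rⱼ` whenever
`(U* V)ᵢⱼ ≠ 0`, which says exactly that `U* V` intertwines `diag(p)` and `diag(r)`, i.e. `ρ = σ`.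
-/

open Matrix ComplexOrder

namespace Real

theorem mul_log_sub_log_le {p r : ℝ} (hp : 0 < p) (hr : 0 < r) :
    p * (log r - log p) ≤ r - p := by
  have h := mul_le_mul_of_nonneg_left (log_le_sub_one_of_pos (div_pos hr hp)) hp.le
  rwa [mul_sub, mul_div_cancel₀ _ hp.ne', mul_one, log_div hr.ne' hp.ne'] at h

theorem mul_log_sub_log_eq_iff {p r : ℝ} (hp : 0 < p) (hr : 0 < r) :
    p * (log r - log p) = r - p ↔ p = r := by
  refine ⟨fun h => ?_, fun h => by simp [h]⟩
  by_contra hne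
  have hr1 : r / p ≠ 1 := by rwa [ne_eq, div_eq_one_iff_eq hp.ne', eq_comm]
  have hlt := mul_lt_mul_of_pos_left (log_lt_sub_one_of_pos (div_pos hr hp) hr1) hp
  rw [mul_sub, mul_div_cancel₀ _ hp.ne', mul_one, log_div hr.ne' hp.ne'] at hlt
  exact hlt.ne h

end Real

section DoublyStochastic

open Real

variable {n : Type*} [Fintype n] [DecidableEq n] {c : Matrix n n ℝ} {p r : n → ℝ}

private theorem sum_sub_sum_sub_mul_log_eq (hc : c ∈ doublyStochastic ℝ n) :
    (∑ j, r j - ∑ i, p i) - (∑ i, ∑ j, p i * log (r j) * c i j - ∑ i, p i * log (p i)) =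
      ∑ i, ∑ j, c i j * (r j - p i - p i * (log (r j) - log (p i))) := by
  have hcol : ∑ i, ∑ j, c i j * r j = ∑ j, r j := by
    rw [Finset.sum_comm]; simp_rw [← Finset.sum_mul, sum_col_of_mem_doublyStochastic hc, one_mul]
  have hrow (f : n → ℝ) : ∑ i, ∑ j, c i j * f i = ∑ i, f i := by
    simp_rw [← Finset.sum_mul, sum_row_of_mem_doublyStochastic hc, one_mul]
  rw [← hcol, ← hrow p, ← hrow (fun i => p i * log (p i))]
  simp only [← Finset.sum_sub_distrib]
  refine Finset.sum_congr rfl fun i _ => Finset.sum_congr rfl fun j _ => by ring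

theorem gibbs_inequality_of_mem_doublyStochastic (hc : c ∈ doublyStochastic ℝ n)
    (hp : ∀ i, 0 < p i) (hr : ∀ j, 0 < r j) :
    ∑ i, ∑ j, p i * log (r j) * c i j - ∑ i, p i * log (p i) ≤ ∑ j, r j - ∑ i, p i := by
  rw [← sub_nonneg, sum_sub_sum_sub_mul_log_eq hc]
  exact Finset.sum_nonneg fun i _ => Finset.sum_nonneg fun j _ =>
    mul_nonneg (nonneg_of_mem_doublyStochastic hc)
      (sub_nonneg.2 (mul_log_sub_log_le (hp i) (hr j)))

theorem gibbs_inequality_eq_iff_of_mem_doublyStochastic (hc : c ∈ doublyStochastic ℝ n)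
    (hp : ∀ i, 0 < p i) (hr : ∀ j, 0 < r j) :
    ∑ i, ∑ j, p i * log (r j) * c i j - ∑ i, p i * log (p i) = ∑ j, r j - ∑ i, p i ↔
      ∀ i j, c i j ≠ 0 → p i = r j := by
  have hterm (i j : n) : 0 ≤ c i j * (r j - p i - p i * (log (r j) - log (p i))) :=
    mul_nonneg (nonneg_of_mem_doublyStochastic hc)
      (sub_nonneg.2 (mul_log_sub_log_le (hp i) (hr j)))
  have hterm_eq_zero (i j : n) :
      c i j * (r j - p i - p i * (log (r j) - log (p i))) = 0 ↔ (c i j ≠ 0 → p i = r j) := by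
    rw [mul_eq_zero, sub_eq_zero, eq_comm (a := r j - p i), mul_log_sub_log_eq_iff (hp i) (hr j),
      or_iff_not_imp_left]
  rw [eq_comm, ← sub_eq_zero, sum_sub_sum_sub_mul_log_eq hc,
    Finset.sum_eq_zero_iff_of_nonneg fun i _ => Finset.sum_nonneg fun j _ => hterm i j]
  simp only [Finset.mem_univ, forall_const,
    Finset.sum_eq_zero_iff_of_nonneg fun j _ => hterm _ j, hterm_eq_zero]

end DoublyStochastic

namespace Matrix

variable {n : Type*} [Fintype n] [DecidableEq n]

noncomputable def conjDiagonal (U : unitaryGroup n ℂ) (d : n → ℝ) : Matrix n n ℂ :=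
  (U : Matrix n n ℂ) * diagonal (fun i => (d i : ℂ)) * star (U : Matrix n n ℂ)

noncomputable def overlap (U V : unitaryGroup n ℂ) : Matrix n n ℝ :=
  of fun i j => Complex.normSq ((star (U : Matrix n n ℂ) * V) i j)

variable (U V : unitaryGroup n ℂ)

theorem trace_conjDiagonal (d : n → ℝ) : trace (conjDiagonal U d) = ∑ i, (d i : ℂ) := by
  rw [conjDiagonal, trace_mul_comm, ← Matrix.mul_assoc, Unitary.coe_star_mul_self,
    Matrix.one_mul, trace_diagonal]

theorem conjDiagonal_mul_conjDiagonal_self (d e : n → ℝ) :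
    conjDiagonal U d * conjDiagonal U e = conjDiagonal U (d * e) := by
  simp only [conjDiagonal, Matrix.mul_assoc]
  rw [← Matrix.mul_assoc (star (U : Matrix n n ℂ)), Unitary.star_mul_self_of_mem U.prop,
    Matrix.one_mul, ← Matrix.mul_assoc (diagonal _), diagonal_mul_diagonal]
  simp

theorem trace_conjDiagonal_mul_conjDiagonal (d e : n → ℝ) :
    trace (conjDiagonal U d * conjDiagonal V e) =
      ((∑ i, ∑ j, d i * e j * overlap U V i j : ℝ) : ℂ) := by
  set W := star (U : Matrix n n ℂ) * V
  have hconj : conjDiagonal U d * conjDiagonal V e = U * (diagonal (fun i => (d i : ℂ)) * W *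
      diagonal (fun j => (e j : ℂ)) * star W) * star (U : Matrix n n ℂ) := by
    simp only [conjDiagonal, W, star_mul, star_star, Matrix.mul_assoc]
    rw [Unitary.mul_star_self_of_mem U.prop, Matrix.mul_one]
  rw [hconj, trace_mul_comm, ← Matrix.mul_assoc, Unitary.star_mul_self_of_mem U.prop,
    Matrix.one_mul, trace]
  push_cast
  refine Finset.sum_congr rfl fun i _ => ?_
  rw [diag_apply, mul_apply]
  refine Finset.sum_congr rfl fun j _ => ?_
  rw [mul_diagonal, diagonal_mul, star_apply, Complex.star_def, overlap, of_apply,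
    ← Complex.mul_conj]
  ring

theorem overlap_mem_doublyStochastic : overlap U V ∈ doublyStochastic ℝ n := by
  set W := star (U : Matrix n n ℂ) * V
  have hW : W ∈ unitaryGroup n ℂ := mul_mem (Unitary.star_mem U.prop) V.prop
  refine mem_doublyStochastic_iff_sum.2
    ⟨fun i j => Complex.normSq_nonneg _, fun i => ?_, fun j => ?_⟩
  · have h : (W * star W) i i = (1 : Matrix n n ℂ) i i := by
      rw [Unitary.mul_star_self_of_mem hW]
    simp only [mul_apply, star_apply, Complex.star_def, Complex.mul_conj, one_apply_eq] at h
    exact_mod_cast h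
  · have h : (star W * W) j j = (1 : Matrix n n ℂ) j j := by
      rw [Unitary.star_mul_self_of_mem hW]
    simp only [mul_apply, star_apply, Complex.star_def, ← Complex.normSq_eq_conj_mul_self,
      one_apply_eq] at h
    exact_mod_cast h

theorem conjDiagonal_eq_conjDiagonal_iff (d e : n → ℝ) :
    conjDiagonal U d = conjDiagonal V e ↔ ∀ i j, overlap U V i j ≠ 0 → d i = e j := by
  set W := star (U : Matrix n n ℂ) * V
  have hU := Unitary.star_mul_self_of_mem U.prop
  have hV := Unitary.star_mul_self_of_mem V.prop
  have hleft : star (U : Matrix n n ℂ) * (conjDiagonal U d * V) =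
      diagonal (fun i => (d i : ℂ)) * W := by
    simp only [conjDiagonal, W, ← Matrix.mul_assoc, hU, Matrix.one_mul]
  have hright : star (U : Matrix n n ℂ) * (conjDiagonal V e * V) =
      W * diagonal (fun j => (e j : ℂ)) := by
    simp only [conjDiagonal, W, Matrix.mul_assoc, hV, Matrix.mul_one]
  rw [← Unitary.mul_left_inj V, ← Unitary.mul_right_inj (star U), Unitary.coe_star, hleft,
    hright, ← Matrix.ext_iff]
  refine forall₂_congr fun i j => ?_
  rw [diagonal_mul, mul_diagonal, mul_comm (W i j), mul_eq_mul_right_iff, Complex.ofReal_inj,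
    overlap, of_apply, Ne, Complex.normSq_eq_zero, or_iff_not_imp_right]

theorem exp_conjDiagonal (d : n → ℝ) :
    NormedSpace.exp (conjDiagonal U d) = conjDiagonal U (fun i => Real.exp (d i)) := by
  have hinv : (U : Matrix n n ℂ)⁻¹ = star (U : Matrix n n ℂ) :=
    inv_eq_left_inv (Unitary.star_mul_self_of_mem U.prop)
  rw [conjDiagonal, ← hinv, exp_conj _ _ Unitary.isUnit_coe, exp_diagonal, hinv, conjDiagonal]
  congr
  funext i
  simp [← Complex.exp_eq_exp_ℂ, Complex.ofReal_exp]

theorem ofReal_smul_conjDiagonal (a : ℝ) (d : n → ℝ) :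
    (a : ℂ) • conjDiagonal U d = conjDiagonal U (a • d) := by
  rw [conjDiagonal, conjDiagonal, ← smul_mul_assoc, ← mul_smul_comm, ← diagonal_smul]
  congr
  funext i
  simp

theorem conjDiagonal_sub_const (d : n → ℝ) (a : ℝ) :
    conjDiagonal U (fun i => d i - a) = conjDiagonal U d - (a : ℂ) • 1 := by
  simp only [conjDiagonal, Complex.ofReal_sub]
  rw [← diagonal_sub (fun i => (d i : ℂ)) fun _ => (a : ℂ), ← smul_one_eq_diagonal,
    Matrix.mul_sub, Matrix.sub_mul, Matrix.mul_smul, Matrix.mul_one, Matrix.smul_mul,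
    Unitary.mul_star_self_of_mem U.prop]

theorem _root_.Matrix.IsHermitian.eq_conjDiagonal {A : Matrix n n ℂ} (hA : A.IsHermitian) :
    A = conjDiagonal hA.eigenvectorUnitary hA.eigenvalues := by
  conv_lhs => rw [hA.spectral_theorem]
  rfl

variable {U V} {p r : n → ℝ}

theorem re_trace_mul_log_sub_re_trace_mul_log :
    (trace (conjDiagonal U p * conjDiagonal V (fun j => Real.log (r j)))).re -
        (trace (conjDiagonal U p * conjDiagonal U (fun i => Real.log (p i)))).re =
      ∑ i, ∑ j, p i * Real.log (r j) * overlap U V i j - ∑ i, p i * Real.log (p i) := by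
  rw [trace_conjDiagonal_mul_conjDiagonal, conjDiagonal_mul_conjDiagonal_self, trace_conjDiagonal,
    Complex.ofReal_re, Complex.re_sum]
  rfl

theorem klein_inequality (hp : ∀ i, 0 < p i) (hr : ∀ j, 0 < r j) :
    (trace (conjDiagonal U p * conjDiagonal V (fun j => Real.log (r j)))).re -
        (trace (conjDiagonal U p * conjDiagonal U (fun i => Real.log (p i)))).re ≤
      ∑ j, r j - ∑ i, p i := by
  rw [re_trace_mul_log_sub_re_trace_mul_log]
  exact gibbs_inequality_of_mem_doublyStochastic (overlap_mem_doublyStochastic U V) hp hr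

theorem klein_inequality_eq_iff (hp : ∀ i, 0 < p i) (hr : ∀ j, 0 < r j) :
    (trace (conjDiagonal U p * conjDiagonal V (fun j => Real.log (r j)))).re -
        (trace (conjDiagonal U p * conjDiagonal U (fun i => Real.log (p i)))).re =
      ∑ j, r j - ∑ i, p i ↔ conjDiagonal U p = conjDiagonal V r := by
  rw [re_trace_mul_log_sub_re_trace_mul_log, conjDiagonal_eq_conjDiagonal_iff]
  exact gibbs_inequality_eq_iff_of_mem_doublyStochastic (overlap_mem_doublyStochastic U V) hp hr

theorem re_trace_mul_sub_smul_one {ρ : Matrix n n ℂ} (hρ : ρ.trace = 1) (X : Matrix n n ℂ)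
    (a : ℝ) : (trace (ρ * (X - (a : ℂ) • 1))).re = (trace (ρ * X)).re - a := by
  rw [Matrix.mul_sub, trace_sub, Matrix.mul_smul, Matrix.mul_one, trace_smul, hρ, smul_eq_mul,
    mul_one, Complex.sub_re, Complex.ofReal_re]

end Matrix

noncomputable def gibbsWeights {n : Type*} [Fintype n] (q : n → ℝ) (j : n) : ℝ :=
  Real.exp (q j) / ∑ k, Real.exp (q k)

section GibbsWeights

variable {n : Type*} [Fintype n] [Nonempty n] (q : n → ℝ)

theorem sum_exp_pos : 0 < ∑ k, Real.exp (q k) :=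
  Finset.sum_pos (fun k _ => Real.exp_pos (q k)) Finset.univ_nonempty

theorem gibbsWeights_pos (j : n) : 0 < gibbsWeights q j :=
  div_pos (Real.exp_pos _) (sum_exp_pos q)

theorem sum_gibbsWeights : ∑ j, gibbsWeights q j = 1 := by
  simp only [gibbsWeights]
  rw [← Finset.sum_div, div_self (sum_exp_pos q).ne']

theorem log_gibbsWeights (j : n) :
    Real.log (gibbsWeights q j) = q j - Real.log (∑ k, Real.exp (q k)) := by
  rw [gibbsWeights, Real.log_div (Real.exp_pos _).ne' (sum_exp_pos q).ne', Real.log_exp]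

end GibbsWeights

namespace Matrix.IsHermitian

variable {n : Type*} [Fintype n] [DecidableEq n] {A : Matrix n n ℂ} (hA : A.IsHermitian)

theorem exp_eq_conjDiagonal :
    NormedSpace.exp A =
      conjDiagonal hA.eigenvectorUnitary (fun j => Real.exp (hA.eigenvalues j)) := by
  conv_lhs => rw [hA.eq_conjDiagonal]
  exact exp_conjDiagonal _ _

theorem trace_exp :
    trace (NormedSpace.exp A) = ((∑ j, Real.exp (hA.eigenvalues j) : ℝ) : ℂ) := by
  rw [hA.exp_eq_conjDiagonal, trace_conjDiagonal, Complex.ofReal_sum]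

theorem inv_trace_exp_smul_exp :
    (trace (NormedSpace.exp A))⁻¹ • NormedSpace.exp A =
      conjDiagonal hA.eigenvectorUnitary (gibbsWeights hA.eigenvalues) := by
  rw [hA.trace_exp, ← Complex.ofReal_inv, hA.exp_eq_conjDiagonal, ofReal_smul_conjDiagonal]
  congr
  funext j
  simp [gibbsWeights, div_eq_inv_mul]

theorem conjDiagonal_log_gibbsWeights [Nonempty n] :
    conjDiagonal hA.eigenvectorUnitary (fun j => Real.log (gibbsWeights hA.eigenvalues j)) =
      A - (Real.log (∑ j, Real.exp (hA.eigenvalues j)) : ℂ) • 1 := by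
  simp only [log_gibbsWeights]
  rw [conjDiagonal_sub_const, ← hA.eq_conjDiagonal]

end Matrix.IsHermitian

theorem gibbs_variational_principle_general
    {n : Type*} [Fintype n] [DecidableEq n] [Nonempty n]
    (H : Matrix n n ℂ) (hH : H.IsHermitian) (β : ℝ)
    (ρ : Matrix n n ℂ) (hρ : ρ.IsHermitian) (hpd : ρ.PosDef) (htr : ρ.trace = 1) :
    (Matrix.trace (ρ * (-(β : ℂ) • H))).re - (Matrix.trace (ρ * matLog hρ)).re ≤
        Real.log (Matrix.trace (NormedSpace.exp (-(β : ℂ) • H))).re ∧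
      ((Matrix.trace (ρ * (-(β : ℂ) • H))).re - (Matrix.trace (ρ * matLog hρ)).re =
          Real.log (Matrix.trace (NormedSpace.exp (-(β : ℂ) • H))).re ↔
        ρ = (Matrix.trace (NormedSpace.exp (-(β : ℂ) • H)))⁻¹ •
              NormedSpace.exp (-(β : ℂ) • H)) := by
  set A := -(β : ℂ) • H
  have hA : A.IsHermitian := hH.smul (by simp [IsSelfAdjoint])
  set U := hρ.eigenvectorUnitary
  set p := hρ.eigenvalues
  have hρU : ρ = conjDiagonal U p := hρ.eq_conjDiagonal
  have hmatLog : matLog hρ = conjDiagonal U (fun i => Real.log (p i)) := rfl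
  have hsum_p : ∑ i, p i = 1 := by
    exact_mod_cast (trace_conjDiagonal U p).symm.trans (hρU ▸ htr)
  have hp (i : n) : 0 < p i := hpd.eigenvalues_pos i
  have hr := gibbsWeights_pos hA.eigenvalues
  have hle := klein_inequality (U := U) (V := hA.eigenvectorUnitary) hp hr
  have heq := klein_inequality_eq_iff (U := U) (V := hA.eigenvectorUnitary) hp hr
  rw [← hρU, hA.conjDiagonal_log_gibbsWeights, re_trace_mul_sub_smul_one htr, sum_gibbsWeights,
    hsum_p] at hle heq
  rw [hA.inv_trace_exp_smul_exp, hA.trace_exp, Complex.ofReal_re, hmatLog, ← heq]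
  constructor
  · linarith
  · constructor <;> intro <;> linarith

/-- Gibbs variational principle: for Hermitian H, β > 0, and any positive-definite
density matrix ρ, Tr[ρ·(−βH)] − Tr[ρ ln ρ] ≤ ln Tr[e^{−βH}], with equality iff
ρ is the Gibbs state e^{−βH}/Tr e^{−βH}. -/
theorem gibbs_variational_principle
    {n : Type*} [Fintype n] [DecidableEq n] [Nonempty n]
    (H : Matrix n n ℂ) (hH : H.IsHermitian) (β : ℝ) (hβ : 0 < β)
    (ρ : Matrix n n ℂ) (hρ : ρ.IsHermitian) (hpd : ρ.PosDef) (htr : ρ.trace = 1) :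
    (Matrix.trace (ρ * (-(β : ℂ) • H))).re - (Matrix.trace (ρ * matLog hρ)).re ≤
        Real.log (Matrix.trace (NormedSpace.exp (-(β : ℂ) • H))).re ∧
      ((Matrix.trace (ρ * (-(β : ℂ) • H))).re - (Matrix.trace (ρ * matLog hρ)).re =
          Real.log (Matrix.trace (NormedSpace.exp (-(β : ℂ) • H))).re ↔
        ρ = (Matrix.trace (NormedSpace.exp (-(β : ℂ) • H)))⁻¹ •
              NormedSpace.exp (-(β : ℂ) • H)) :=
  gibbs_variational_principle_general H hH β ρ hρ hpd htr
end

section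
/- The difference of free energies in a DQAEM iteration satisfies β(𝒢(θ_{t+1}) − 𝒢(θ_t)) = (𝒰(θ_{t+1};θ_t) − 𝒰(θ_t;θ_t)) + KL(ρ(θ_t) ‖ ρ(θ_{t+1})), where KL is the quantum relative entropy. -/
open Matrix

/-!
With `Z(θ) = Tr e^{-βA(θ)}`, functional calculus gives `ln ρ(θ) = -βA(θ) - (ln Z(θ))·1`, and
`Tr ρ(θ) = 1`. Hence the relative entropy `Tr[ρ(θₜ)(ln ρ(θₜ) - ln ρ(θₜ₊₁))]` equals
`𝒰(θₜ;θₜ) - 𝒰(θₜ₊₁;θₜ) + ln Z(θₜ₊₁) - ln Z(θₜ)`, while `β𝒢(θ) = ln Z(θ)`.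
-/

namespace Matrix

variable {n : Type*} [Fintype n] [DecidableEq n]

lemma matLog_eq_cfc_log {ρ : Matrix n n ℂ} (h : ρ.IsHermitian) : matLog h = cfc Real.log ρ :=
  (h.cfc_eq Real.log).symm

lemma IsHermitian.trace_cfc {𝕜 : Type*} [RCLike 𝕜] {A : Matrix n n 𝕜} (hA : A.IsHermitian)
    (f : ℝ → ℝ) :
    (cfc f A).trace = ∑ i, (f (hA.eigenvalues i) : 𝕜) := by
  rw [hA.cfc_eq, IsHermitian.cfc, Unitary.conjStarAlgAut_apply, trace_mul_cycle,
    Unitary.coe_star_mul_self, one_mul, trace_diagonal]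
  rfl

variable {M M₀ M₁ : Matrix n n ℂ}

lemma IsHermitian.cfc_exp (hM : M.IsHermitian) : cfc Real.exp M = NormedSpace.exp M := by
  -- The CFC `exp`/`log` API needs a normed algebra; the L² operator norm provides one.
  open scoped Matrix.Norms.L2Operator in
  exact CFC.real_exp_eq_normedSpace_exp hM.isSelfAdjoint

lemma IsHermitian.trace_exp_s10 (hM : M.IsHermitian) :
    (NormedSpace.exp M).trace = ((∑ i, Real.exp (hM.eigenvalues i) : ℝ) : ℂ) := by
  rw [← hM.cfc_exp, hM.trace_cfc, Complex.ofReal_sum]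
  rfl

lemma IsHermitian.ofReal_re_trace_exp (hM : M.IsHermitian) :
    ((NormedSpace.exp M).trace.re : ℂ) = (NormedSpace.exp M).trace := by
  rw [hM.trace_exp_s10, Complex.ofReal_re]

lemma IsHermitian.re_trace_exp_pos [Nonempty n] (hM : M.IsHermitian) :
    0 < (NormedSpace.exp M).trace.re := by
  rw [hM.trace_exp_s10, Complex.ofReal_re]
  exact Finset.sum_pos (fun i _ => Real.exp_pos _) Finset.univ_nonempty

noncomputable def gibbsState (M : Matrix n n ℂ) : Matrix n n ℂ :=
  (NormedSpace.exp M).trace⁻¹ • NormedSpace.exp M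

lemma IsHermitian.trace_gibbsState [Nonempty n] (hM : M.IsHermitian) :
    (gibbsState M).trace = 1 := by
  rw [gibbsState, trace_smul, smul_eq_mul, inv_mul_cancel₀]
  rw [← hM.ofReal_re_trace_exp, Complex.ofReal_ne_zero]
  exact hM.re_trace_exp_pos.ne'

lemma IsHermitian.cfc_log_gibbsState [Nonempty n] (hM : M.IsHermitian) :
    cfc Real.log (gibbsState M) =
      M - algebraMap ℝ _ (Real.log (NormedSpace.exp M).trace.re) := by
  have hspec : ∀ x ∈ spectrum ℝ (NormedSpace.exp M), x ≠ 0 := by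
    rw [← hM.cfc_exp, cfc_map_spectrum Real.exp M]
    rintro - ⟨x, -, rfl⟩
    exact (Real.exp_pos x).ne'
  have hsmul : gibbsState M = (NormedSpace.exp M).trace.re⁻¹ • NormedSpace.exp M := by
    rw [gibbsState, ← Complex.coe_smul, Complex.ofReal_inv, hM.ofReal_re_trace_exp]
  rw [hsmul]
  open scoped Matrix.Norms.L2Operator in
  calc CFC.log _ = _ := CFC.log_smul _ hspec (inv_ne_zero hM.re_trace_exp_pos.ne')
    _ = _ := by rw [CFC.log_exp M hM.isSelfAdjoint, Real.log_inv, map_neg]; abel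

lemma IsHermitian.re_trace_gibbsState_mul_log_sub_log [Nonempty n] (hM₀ : M₀.IsHermitian)
    (hM₁ : M₁.IsHermitian) :
    (gibbsState M₀ * (cfc Real.log (gibbsState M₀) - cfc Real.log (gibbsState M₁))).trace.re =
      (gibbsState M₀ * M₀).trace.re - (gibbsState M₀ * M₁).trace.re +
        (Real.log (NormedSpace.exp M₁).trace.re - Real.log (NormedSpace.exp M₀).trace.re) := by
  rw [hM₀.cfc_log_gibbsState, hM₁.cfc_log_gibbsState]
  simp only [Algebra.algebraMap_eq_smul_one, mul_sub, mul_smul_comm, mul_one, trace_sub,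
    trace_smul, hM₀.trace_gibbsState, Complex.real_smul, Complex.sub_re, Complex.ofReal_re]
  ring

end Matrix

/-- DQAEM free-energy decomposition:
β(𝒢(θ_{t+1}) − 𝒢(θ_t)) = (𝒰(θ_{t+1};θ_t) − 𝒰(θ_t;θ_t)) + KL(ρ(θ_t)‖ρ(θ_{t+1})),
where ρ(θ) = e^{−βA(θ)}/Tr e^{−βA(θ)}, 𝒢(θ) = (1/β)·ln Tr e^{−βA(θ)},
𝒰(θ;θ') = Tr[ρ(θ')·(−βA(θ))], and KL is the quantum relative entropy. -/
theorem dqaem_free_energy_difference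
    {K : ℕ} (hK : 0 < K) {Θ : Type*}
    (A : Θ → Matrix (Fin K) (Fin K) ℂ) (hA : ∀ θ, (A θ).IsHermitian)
    (β : ℝ) (hβ : 0 < β)
    (ρ : Θ → Matrix (Fin K) (Fin K) ℂ)
    (hρ : ∀ θ, ρ θ = (Matrix.trace (NormedSpace.exp (-(β : ℂ) • A θ)))⁻¹ •
                       NormedSpace.exp (-(β : ℂ) • A θ))
    (𝒢 : Θ → ℝ)
    (h𝒢 : ∀ θ, 𝒢 θ = (1 / β) *
        Real.log (Matrix.trace (NormedSpace.exp (-(β : ℂ) • A θ))).re)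
    (𝒰 : Θ → Θ → ℝ)
    (h𝒰 : ∀ θ θ', 𝒰 θ θ' = (Matrix.trace (ρ θ' * (-(β : ℂ) • A θ))).re)
    (θt θt1 : Θ)
    (hherm0 : (ρ θt).IsHermitian) (hherm1 : (ρ θt1).IsHermitian) :
    β * (𝒢 θt1 - 𝒢 θt) =
      (𝒰 θt1 θt - 𝒰 θt θt) +
        (Matrix.trace (ρ θt * (matLog hherm0 - matLog hherm1))).re := by
  have : Nonempty (Fin K) := ⟨⟨0, hK⟩⟩
  have hM : ∀ θ, (-(β : ℂ) • A θ).IsHermitian := fun θ =>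
    (hA θ).smul (IsSelfAdjoint.neg (Complex.conj_ofReal β))
  have hgibbs : ∀ θ, ρ θ = gibbsState (-(β : ℂ) • A θ) := hρ
  rw [matLog_eq_cfc_log, matLog_eq_cfc_log, h𝒰, h𝒰, h𝒢, h𝒢, hgibbs θt, hgibbs θt1,
    (hM θt).re_trace_gibbsState_mul_log_sub_log (hM θt1)]
  field_simp
  ring
end
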